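/- arXiv:1708.00216 — 4 statements merged into one kernel-verified Lean document; each statement's English description precedes it below -/
import Mathlib

section
/- Let α = {X_i = (a_i, b_i)}_{i=1}^n and β = {X'_i = (c_i, d_i)}_{i=1}^n be two families of bounded open intervals in ℝ whose closures are pairwise disjoint within each family, and which are similarly ordered: X_i < X_j if and only if X'_i < X'_j (where I < J means every point of I is less than every point of J). Suppose for each i there is an orientation-preserving (strictly increasing) homeomorphism ψ_i : X_i → X'_i. Then there exists a homeomorphism ψ : ℝ → ℝ whose restriction to each X_i equals ψ_i. -/
open Set

lemma sorted_ext : ∀ (n : ℕ) (A B C D : Fin n → ℝ),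
    (∀ k, A k < B k) → (∀ k, C k < D k) →
    (∀ k l : Fin n, k < l → B k < A l) → (∀ k l : Fin n, k < l → D k < C l) →
    ∀ (φ : Fin n → ℝ → ℝ),
    (∀ k, StrictMonoOn (φ k) (Ioo (A k) (B k))) →
    (∀ k, BijOn (φ k) (Ioo (A k) (B k)) (Ioo (C k) (D k))) →
    ∀ p q : ℝ, (∀ k, B k < p) → (∀ k, D k < q) →
    ∃ f : ℝ → ℝ, StrictMono f ∧ Function.Surjective f ∧ f p = q ∧
      ∀ k, EqOn f (φ k) (Ioo (A k) (B k)) := by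
  intro n
  induction n with
  | zero =>
    intro A B C D _ _ _ _ φ _ _ p q _ _
    refine ⟨fun x => x - p + q, fun x y h => by dsimp; linarith, fun y => ⟨y - q + p, by ring⟩,
      by ring, fun k => k.elim0⟩
  | succ n IH =>
    intro A B C D hAB hCD hsort hsort' φ hmono hbij p q hp hq
    set m : Fin (n+1) := Fin.last n with hm
    obtain ⟨f0, hf0mono, hf0surj, hf0p, hf0eq⟩ :=
      IH (A ∘ Fin.castSucc) (B ∘ Fin.castSucc) (C ∘ Fin.castSucc) (D ∘ Fin.castSucc)
        (fun k => hAB _) (fun k => hCD _)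
        (fun k l hkl => hsort _ _ (by simpa using hkl))
        (fun k l hkl => hsort' _ _ (by simpa using hkl))
        (φ ∘ Fin.castSucc) (fun k => hmono _) (fun k => hbij _)
        (A m) (C m)
        (fun k => hsort _ _ (Fin.castSucc_lt_last k))
        (fun k => hsort' _ _ (Fin.castSucc_lt_last k))
    have hBp : B m < p := hp m
    have hDq : D m < q := hq m
    set s : ℝ := (q - D m) / (p - B m) with hs
    have hspos : 0 < s := div_pos (by linarith) (by linarith)
    set f : ℝ → ℝ := fun x =>
      if x ≤ A m then f0 x
      else if x < B m then φ m x
      else if x ≤ p then D m + (x - B m) * s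
      else x - p + q with hf
    -- branch value facts
    have hv1 : ∀ x, x ≤ A m → f x = f0 x ∧ f x ≤ C m := by
      intro x hx
      have : f x = f0 x := by simp [hf, hx]
      refine ⟨this, ?_⟩
      rw [this, ← hf0p]
      exact hf0mono.monotone hx
    have hv2 : ∀ x, A m < x → x < B m → f x = φ m x ∧ C m < f x ∧ f x < D m := by
      intro x h1 h2
      have hfx : f x = φ m x := by simp [hf, not_le.mpr h1, h2]
      have := (hbij m).mapsTo ⟨h1, h2⟩
      exact ⟨hfx, by rw [hfx]; exact this.1, by rw [hfx]; exact this.2⟩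
    have hv3 : ∀ x, B m ≤ x → x ≤ p → f x = D m + (x - B m) * s ∧ D m ≤ f x ∧ f x ≤ q := by
      intro x h1 h2
      have hfx : f x = D m + (x - B m) * s := by
        have : ¬ x ≤ A m := not_le.mpr (lt_of_lt_of_le (hAB m) h1)
        simp [hf, this, not_lt.mpr h1, h2]
      refine ⟨hfx, ?_, ?_⟩
      · rw [hfx]; nlinarith
      · have key : (p - B m) * s = q - D m := by
          rw [hs, mul_comm]; exact div_mul_cancel₀ _ (by linarith)
        have h4 : (x - B m) * s ≤ (p - B m) * s :=
          mul_le_mul_of_nonneg_right (by linarith) (le_of_lt hspos)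
        rw [hfx]; linarith
    have hv4 : ∀ x, p < x → f x = x - p + q ∧ q < f x := by
      intro x h1
      have hfx : f x = x - p + q := by
        have h2 : ¬ x ≤ A m := not_le.mpr (lt_trans (lt_trans (hAB m) hBp) h1)
        have h3 : ¬ x < B m := not_lt.mpr (le_of_lt (lt_trans hBp h1))
        simp [hf, h2, h3, not_le.mpr h1]
      exact ⟨hfx, by rw [hfx]; linarith⟩
    have hfq : f p = q := by
      have h0 := (hv3 p (le_of_lt hBp) le_rfl).1
      have key : (p - B m) * s = q - D m := by rw [hs, mul_comm]; exact div_mul_cancel₀ _ (by linarith)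
      rw [h0]; linarith
    have hCD' : C m < D m := hCD m
    have hmonoF : StrictMono f := by
      intro x y hxy
      rcases le_or_gt y (A m) with hy1 | hy1
      · rw [(hv1 x (le_of_lt (lt_of_lt_of_le hxy hy1))).1, (hv1 y hy1).1]
        exact hf0mono hxy
      rcases lt_or_ge y (B m) with hy2 | hy2
      · rcases le_or_gt x (A m) with hx1 | hx1
        · calc f x ≤ C m := (hv1 x hx1).2
            _ < f y := (hv2 y hy1 hy2).2.1
        · rw [(hv2 x hx1 (lt_trans hxy hy2)).1, (hv2 y hy1 hy2).1]
          exact hmono m ⟨hx1, lt_trans hxy hy2⟩ ⟨hy1, hy2⟩ hxy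
      rcases le_or_gt y p with hy3 | hy3
      · have hfyD := (hv3 y hy2 hy3).2.1
        rcases le_or_gt x (A m) with hx1 | hx1
        · calc f x ≤ C m := (hv1 x hx1).2
            _ < D m := hCD'
            _ ≤ f y := hfyD
        rcases lt_or_ge x (B m) with hx2 | hx2
        · calc f x < D m := (hv2 x hx1 hx2).2.2
            _ ≤ f y := hfyD
        · rw [(hv3 x hx2 (le_of_lt (lt_of_lt_of_le hxy hy3))).1, (hv3 y hy2 hy3).1]
          nlinarith
      · have hfy := (hv4 y hy3).2
        rcases le_or_gt x (A m) with hx1 | hx1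
        · have := (hv1 x hx1).2; linarith
        rcases lt_or_ge x (B m) with hx2 | hx2
        · have := (hv2 x hx1 hx2).2.2; linarith [hq m]
        rcases le_or_gt x p with hx3 | hx3
        · have := (hv3 x hx2 hx3).2.2; linarith
        · rw [(hv4 x hx3).1, (hv4 y hy3).1]; linarith
    have hsurjF : Function.Surjective f := by
      intro y
      rcases le_or_gt y (C m) with hy1 | hy1
      · obtain ⟨x, hx⟩ := hf0surj y
        have hxA : x ≤ A m := by
          by_contra h
          have := hf0mono (not_le.mp h)
          rw [hf0p, hx] at this; linarith
        exact ⟨x, by rw [(hv1 x hxA).1, hx]⟩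
      rcases lt_or_ge y (D m) with hy2 | hy2
      · obtain ⟨x, hx, hfx⟩ := (hbij m).surjOn ⟨hy1, hy2⟩
        exact ⟨x, by rw [(hv2 x hx.1 hx.2).1, hfx]⟩
      rcases le_or_gt y q with hy3 | hy3
      · refine ⟨B m + (y - D m) / s, ?_⟩
        have h1 : 0 ≤ (y - D m) / s := div_nonneg (by linarith) (le_of_lt hspos)
        have key : (p - B m) * s = q - D m := by rw [hs, mul_comm]; exact div_mul_cancel₀ _ (by linarith)
        have h2 : (y - D m) / s ≤ p - B m := by
          rw [div_le_iff₀ hspos]; linarith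
        have h0 := (hv3 (B m + (y - D m) / s) (by linarith) (by linarith)).1
        have h5 : (y - D m) / s * s = y - D m := div_mul_cancel₀ _ (ne_of_gt hspos)
        rw [h0]
        have : B m + (y - D m) / s - B m = (y - D m) / s := by ring
        rw [this, h5]; ring
      · exact ⟨y - q + p, by rw [(hv4 (y - q + p) (by linarith)).1]; ring⟩
    refine ⟨f, hmonoF, hsurjF, hfq, ?_⟩
    intro k
    refine Fin.lastCases ?_ ?_ k
    · intro x hx
      exact (hv2 x hx.1 hx.2).1
    · intro k x hx
      have hxA : x ≤ A m := le_of_lt (lt_trans hx.2 (hsort _ _ (Fin.castSucc_lt_last k)))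
      rw [(hv1 x hxA).1]
      exact hf0eq k hx

/-- Extension of finitely many orientation preserving homeomorphisms
between similarly ordered families of bounded open intervals with pairwise disjoint
closures to a homeomorphism of ℝ. -/
theorem stmt_1 (n : ℕ) (a b c d : Fin n → ℝ)
    (hab : ∀ i, a i < b i) (hcd : ∀ i, c i < d i)
    (hdisj : ∀ i j, i ≠ j → Icc (a i) (b i) ∩ Icc (a j) (b j) = ∅)
    (hdisj' : ∀ i j, i ≠ j → Icc (c i) (d i) ∩ Icc (c j) (d j) = ∅)
    (horder : ∀ i j, i ≠ j →
      ((∀ x ∈ Ioo (a i) (b i), ∀ y ∈ Ioo (a j) (b j), x < y) ↔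
       (∀ x ∈ Ioo (c i) (d i), ∀ y ∈ Ioo (c j) (d j), x < y)))
    (ψ : Fin n → ℝ → ℝ)
    (hψcont : ∀ i, ContinuousOn (ψ i) (Ioo (a i) (b i)))
    (hψmono : ∀ i, StrictMonoOn (ψ i) (Ioo (a i) (b i)))
    (hψbij : ∀ i, BijOn (ψ i) (Ioo (a i) (b i)) (Ioo (c i) (d i))) :
    ∃ Ψ : ℝ ≃ₜ ℝ, ∀ i, EqOn (⇑Ψ) (ψ i) (Ioo (a i) (b i)) := by
  classical
  have ordiff : ∀ u v u' v' : ℝ, u < v → u' < v' → (v < u' ∨ v' < u) →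
      ((∀ x ∈ Ioo u v, ∀ y ∈ Ioo u' v', x < y) ↔ v < u') := by
    intro u v u' v' h1 h2 h3
    constructor
    · intro h
      rcases h3 with h3 | h3
      · exact h3
      · exfalso
        have hx := h ((u+v)/2) ⟨by linarith, by linarith⟩ ((u'+v')/2) ⟨by linarith, by linarith⟩
        linarith
    · intro h x hx y hy
      exact lt_trans (lt_trans hx.2 h) hy.1
  have tri : ∀ i j, i ≠ j → b i < a j ∨ b j < a i := by
    intro i j hij
    by_contra h
    push_neg at h
    obtain ⟨h1, h2⟩ := h
    have hmem : max (a i) (a j) ∈ Icc (a i) (b i) ∩ Icc (a j) (b j) :=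
      ⟨⟨le_max_left _ _, max_le (le_of_lt (hab i)) h1⟩,
       ⟨le_max_right _ _, max_le h2 (le_of_lt (hab j))⟩⟩
    rw [hdisj i j hij] at hmem
    exact hmem
  have tri' : ∀ i j, i ≠ j → d i < c j ∨ d j < c i := by
    intro i j hij
    by_contra h
    push_neg at h
    obtain ⟨h1, h2⟩ := h
    have hmem : max (c i) (c j) ∈ Icc (c i) (d i) ∩ Icc (c j) (d j) :=
      ⟨⟨le_max_left _ _, max_le (le_of_lt (hcd i)) h1⟩,
       ⟨le_max_right _ _, max_le h2 (le_of_lt (hcd j))⟩⟩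
    rw [hdisj' i j hij] at hmem
    exact hmem
  have key : ∀ i j, i ≠ j → (b i < a j ↔ d i < c j) := by
    intro i j hij
    calc b i < a j ↔ (∀ x ∈ Ioo (a i) (b i), ∀ y ∈ Ioo (a j) (b j), x < y) :=
          (ordiff _ _ _ _ (hab i) (hab j) (tri i j hij)).symm
      _ ↔ (∀ x ∈ Ioo (c i) (d i), ∀ y ∈ Ioo (c j) (d j), x < y) := horder i j hij
      _ ↔ d i < c j := ordiff _ _ _ _ (hcd i) (hcd j) (tri' i j hij)
  have ainj : Function.Injective a := by
    intro i j hij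
    by_contra hne
    rcases tri i j hne with h | h
    · have := hab i; rw [hij] at this; linarith
    · have := hab j; rw [hij] at h; linarith
  set σ := Tuple.sort a with hσ
  have hstrA : StrictMono (a ∘ σ) :=
    (Tuple.monotone_sort a).strictMono_of_injective (ainj.comp σ.injective)
  have hsortAB : ∀ k l : Fin n, k < l → b (σ k) < a (σ l) := by
    intro k l hkl
    have hne : σ k ≠ σ l := fun h => (ne_of_lt hkl) (σ.injective h)
    rcases tri _ _ hne with h | h
    · exact h
    · exfalso
      have := hstrA hkl
      simp only [Function.comp] at this
      linarith [hab (σ k), hab (σ l)]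
  have hsortCD : ∀ k l : Fin n, k < l → d (σ k) < c (σ l) := by
    intro k l hkl
    have hne : σ k ≠ σ l := fun h => (ne_of_lt hkl) (σ.injective h)
    exact (key _ _ hne).mp (hsortAB k l hkl)
  obtain ⟨P, hP⟩ := (Set.finite_range b).bddAbove
  obtain ⟨Q, hQ⟩ := (Set.finite_range d).bddAbove
  obtain ⟨f, hfmono, hfsurj, -, hfeq⟩ :=
    sorted_ext n (a ∘ σ) (b ∘ σ) (c ∘ σ) (d ∘ σ)
      (fun k => hab _) (fun k => hcd _) hsortAB hsortCD
      (ψ ∘ σ) (fun k => hψmono _) (fun k => hψbij _)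
      (P + 1) (Q + 1)
      (fun k => lt_of_le_of_lt (hP (mem_range_self _)) (by linarith))
      (fun k => lt_of_le_of_lt (hQ (mem_range_self _)) (by linarith))
  refine ⟨(StrictMono.orderIsoOfSurjective f hfmono hfsurj).toHomeomorph, ?_⟩
  intro i x hx
  have h1 : (StrictMono.orderIsoOfSurjective f hfmono hfsurj).toHomeomorph x = f x := rfl
  rw [h1]
  have h2 := hfeq (σ.symm i)
  simp only [Function.comp, Equiv.apply_symm_apply] at h2
  exact h2 hx
end

section
/- Every strip is foliated homeomorphic to a model strip. That is, for every strip S there exist a model strip S' and a homeomorphism φ : S → S' mapping leaves of the canonical foliation of S onto leaves of the canonical foliation of S'. -/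
open Set

/-- A strip: ℝ×(u,v) ⊆ S ⊆ ℝ×[u,v], open in ℝ×[u,v]. -/
def IsStrip (S : Set (ℝ × ℝ)) (u v : ℝ) : Prop :=
  u < v ∧ (univ ×ˢ Ioo u v) ⊆ S ∧ S ⊆ univ ×ˢ Icc u v ∧
  ∃ U : Set (ℝ × ℝ), IsOpen U ∧ S = U ∩ (univ ×ˢ Icc u v)

/-- The boundary ∂S of a strip. -/
def stripBd (S : Set (ℝ × ℝ)) (u v : ℝ) : Set (ℝ × ℝ) :=
  S ∩ {p | p.2 = u ∨ p.2 = v}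

/-- The partial order on the boundary of a strip: (a,x) < (b,y) iff a < b and x = y. -/
def bdLt (p q : ℝ × ℝ) : Prop := p.1 < q.1 ∧ p.2 = q.2

/-- Leaves of the canonical foliation of a subset A of the plane: connected
components of the horizontal sections of A.  For a strip these are exactly the
horizontal lines ℝ×{t}, t ∈ (u,v), together with the boundary intervals. -/
def IsLeaf (A L : Set (ℝ × ℝ)) : Prop :=
  ∃ p ∈ A, L = connectedComponentIn ({q : ℝ × ℝ | q.2 = p.2} ∩ A) p

/-- A foliated homeomorphism of A onto B: a homeomorphism (in the subspace
topologies) mapping each leaf of the canonical foliation of A onto a leaf of the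
canonical foliation of B. -/
def FoliatedHomeo (A B : Set (ℝ × ℝ)) (F : ℝ × ℝ → ℝ × ℝ) : Prop :=
  BijOn F A B ∧ ContinuousOn F A ∧
  (∃ G : ℝ × ℝ → ℝ × ℝ, InvOn G F A B ∧ ContinuousOn G B) ∧
  ∀ L, IsLeaf A L → IsLeaf B (F '' L)

/-- A model strip: a strip whose boundary intervals (connected components of the
boundary) are bounded and have pairwise disjoint closures. -/
def IsModelStrip (S : Set (ℝ × ℝ)) (u v : ℝ) : Prop :=
  IsStrip S u v ∧
  (∀ p ∈ stripBd S u v, Bornology.IsBounded (connectedComponentIn (stripBd S u v) p)) ∧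
  (∀ p ∈ stripBd S u v, ∀ q ∈ stripBd S u v,
    connectedComponentIn (stripBd S u v) p ≠ connectedComponentIn (stripBd S u v) q →
    closure (connectedComponentIn (stripBd S u v) p) ∩
      closure (connectedComponentIn (stripBd S u v) q) = ∅)

/-!
Write the strip as `ℝ × (u, v) ∪ Bu × {u} ∪ Bv × {v}` with `Bu`, `Bv` open. On a boundary line
use a staircase `x ↦ arctan x + ∑ w d · [d < x]` whose summable weights vanish on `B` and are
positive at the countably many points of `Bᶜ` isolated from the right in `Bᶜ`. It is strictly
increasing, bounded and continuous on `B`, and it jumps at every common endpoint of two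
components of `B`, so it maps the components of `B` onto bounded intervals with pairwise disjoint
closures. Inside the strip, interpolate between the two staircases, smoothing each jump into a
ramp whose width is the distance to the boundary line, and add `(t - u) (v - t) x` so that each
interior line is mapped onto itself. The map `(x, t) ↦ (f x t, t)` is continuous and strictly
increasing along every horizontal line, hence a homeomorphism onto its image, which is a model
strip; as it preserves the horizontal lines, it maps leaves onto leaves.
-/

open Filter Topology Function

lemma image_connectedComponentIn_of_leftInvOn {X Y : Type*} [TopologicalSpace X]
    [TopologicalSpace Y] {f : X → Y} {f' : Y → X} {s : Set X} {x : X} (hf : ContinuousOn f s)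
    (hf' : ContinuousOn f' (f '' s)) (hinv : LeftInvOn f' f s) (hx : x ∈ s) :
    f '' connectedComponentIn s x = connectedComponentIn (f '' s) (f x) := by
  refine (hf.image_connectedComponentIn_subset hx).antisymm ?_
  have h := hf'.image_connectedComponentIn_subset (mem_image_of_mem f hx)
  rw [hinv.image_image, hinv hx] at h
  calc connectedComponentIn (f '' s) (f x)
      = f '' (f' '' connectedComponentIn (f '' s) (f x)) :=
        (hinv.rightInvOn_image.image_image' (connectedComponentIn_subset _ _)).symm
    _ ⊆ f '' connectedComponentIn s x := image_mono h

section Monotone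

variable {g : ℝ → ℝ} {B : Set ℝ}

lemma StrictMono.isOpen_image (hg : StrictMono g) (hB : IsOpen B)
    (hgc : ∀ x ∈ B, ContinuousAt g x) : IsOpen (g '' B) := by
  rw [isOpen_iff_mem_nhds]
  rintro _ ⟨x, hx, rfl⟩
  obtain ⟨ε, hε, hsub⟩ := Metric.nhds_basis_closedBall.mem_iff.1 (hB.mem_nhds hx)
  rw [Real.closedBall_eq_Icc] at hsub
  have hIcc := intermediate_value_Icc (by linarith)
    fun z hz => (hgc z (hsub hz)).continuousWithinAt
  exact mem_of_superset (Ioo_mem_nhds (hg (by linarith)) (hg (by linarith)))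
    (Ioo_subset_Icc_self.trans (hIcc.trans (image_mono hsub)))

lemma StrictMono.image_connectedComponentIn (hg : StrictMono g) (hB : IsOpen B)
    (hgc : ∀ x ∈ B, ContinuousAt g x) {x : ℝ} (hx : x ∈ B) :
    g '' connectedComponentIn B x = connectedComponentIn (g '' B) (g x) := by
  have hinv : LeftInvOn (invFunOn g B) g B := hg.injective.injOn.leftInvOn_invFunOn
  refine image_connectedComponentIn_of_leftInvOn (fun z hz => (hgc z hz).continuousWithinAt)
    ?_ hinv hx
  rintro _ ⟨z, hz, rfl⟩
  refine (continuousAt_of_monotoneOn_of_image_mem_nhds ?_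
    ((hg.isOpen_image hB hgc).mem_nhds (mem_image_of_mem g hz)) ?_).continuousWithinAt
  · rintro _ ⟨a, ha, rfl⟩ _ ⟨b, hb, rfl⟩ hab
    rw [hinv ha, hinv hb]
    exact hg.le_iff_le.1 hab
  · rw [hinv.image_image, hinv hz]
    exact hB.mem_nhds hz

end Monotone

noncomputable def rampStep (s y : ℝ) : ℝ :=
  if 0 < s then max 0 (min 1 (y / s)) else if 0 < y then 1 else 0

lemma rampStep_nonneg (s y : ℝ) : 0 ≤ rampStep s y := by
  unfold rampStep; split_ifs <;> simp

lemma rampStep_le_one (s y : ℝ) : rampStep s y ≤ 1 := by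
  unfold rampStep; split_ifs <;> simp

lemma rampStep_mono (s : ℝ) : Monotone (rampStep s) := by
  intro a b hab
  unfold rampStep
  split_ifs with _ ha hb hb
  · gcongr
  · exact le_rfl
  · exact absurd (ha.trans_le hab) hb
  · exact zero_le_one
  · exact le_rfl

lemma rampStep_of_nonpos {s y : ℝ} (hy : y ≤ 0) : rampStep s y = 0 := by
  unfold rampStep
  split_ifs with hs hy'
  · exact max_eq_left (min_le_of_right_le (div_nonpos_of_nonpos_of_nonneg hy hs.le))
  · exact absurd hy' hy.not_gt
  · rfl

lemma rampStep_of_le {s y : ℝ} (hsy : s ≤ y) (hy : 0 < y) : rampStep s y = 1 := by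
  unfold rampStep
  split_ifs with hs'
  · rw [min_eq_left ((one_le_div hs').2 hsy), max_eq_right zero_le_one]
  · rfl

lemma continuousOn_rampStep : ContinuousOn (uncurry rampStep) {q | 0 < q.1} :=
  (continuousOn_const.sup (continuousOn_const.inf
    (continuousOn_snd.div continuousOn_fst fun _ hq => ne_of_gt hq))).congr
    fun _ hq => if_pos hq

noncomputable def jumpSum (w : ℝ → ℝ) (s x : ℝ) : ℝ := ∑' d, w d * rampStep s (x - d)

section JumpSum

variable {w : ℝ → ℝ}

lemma summable_jumpSum (hw₀ : 0 ≤ w) (hw : Summable w) (s x : ℝ) :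
    Summable fun d => w d * rampStep s (x - d) :=
  hw.of_nonneg_of_le (fun d => mul_nonneg (hw₀ d) (rampStep_nonneg _ _))
    fun d => mul_le_of_le_one_right (hw₀ d) (rampStep_le_one _ _)

lemma jumpSum_mem_Icc (hw₀ : 0 ≤ w) (hw : Summable w) (s x : ℝ) :
    jumpSum w s x ∈ Icc 0 (∑' d, w d) :=
  ⟨tsum_nonneg fun d => mul_nonneg (hw₀ d) (rampStep_nonneg _ _),
    (summable_jumpSum hw₀ hw s x).tsum_le_tsum
      (fun d => mul_le_of_le_one_right (hw₀ d) (rampStep_le_one _ _)) hw⟩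

lemma jumpSum_mono (hw₀ : 0 ≤ w) (hw : Summable w) (s : ℝ) : Monotone (jumpSum w s) :=
  fun _ _ hxy => (summable_jumpSum hw₀ hw s _).tsum_le_tsum
    (fun d => mul_le_mul_of_nonneg_left (rampStep_mono s (by linarith)) (hw₀ d))
    (summable_jumpSum hw₀ hw s _)

lemma jumpSum_add_le (hw₀ : 0 ≤ w) (hw : Summable w) {b x : ℝ} (hbx : b < x) :
    jumpSum w 0 b + w b ≤ jumpSum w 0 x := by
  classical
  have hsingle : Summable fun d => if d = b then w d else 0 :=
    summable_of_ne_finset_zero (s := {b}) fun d hd => if_neg (by simpa using hd)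
  rw [jumpSum, ← tsum_ite_eq b w, ← (summable_jumpSum hw₀ hw 0 b).tsum_add hsingle]
  refine ((summable_jumpSum hw₀ hw 0 b).add hsingle).tsum_le_tsum (fun d => ?_)
    (summable_jumpSum hw₀ hw 0 x)
  split_ifs with hd
  · subst hd
    rw [sub_self, rampStep_of_nonpos le_rfl, rampStep_of_le (s := 0) (by linarith) (by linarith)]
    simp
  · rw [add_zero]
    exact mul_le_mul_of_nonneg_left (rampStep_mono 0 (by linarith)) (hw₀ d)

lemma eventually_jumpSum_eq {x : ℝ} (hx : x ∉ closure (support w)) :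
    ∀ᶠ q in 𝓝 (0, x), uncurry (jumpSum w) q = jumpSum w 0 x := by
  obtain ⟨δ, hδ, hball⟩ := Metric.mem_nhds_iff.1 (isClosed_closure.isOpen_compl.mem_nhds hx)
  filter_upwards [prod_mem_nhds (Iio_mem_nhds (half_pos hδ))
    (Metric.ball_mem_nhds x (half_pos hδ))] with ⟨s, y⟩ ⟨hs, hy⟩
  simp only [mem_Iio, Metric.mem_ball, Real.dist_eq] at hs hy
  refine tsum_congr fun d => ?_
  by_cases hd : w d = 0
  · simp [hd]
  have hdist : δ ≤ |d - x| := by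
    by_contra! h
    exact hball (by rwa [Metric.mem_ball, Real.dist_eq]) (subset_closure hd)
  rcases le_abs'.1 hdist with h | h
  · rw [rampStep_of_le (by linarith [abs_lt.1 hy]) (by linarith [abs_lt.1 hy]),
      rampStep_of_le (s := 0) (by linarith) (by linarith)]
  · rw [rampStep_of_nonpos (by linarith [abs_lt.1 hy]), rampStep_of_nonpos (by linarith)]

lemma continuousAt_jumpSum (hw₀ : 0 ≤ w) (hw : Summable w) {s x : ℝ}
    (h : 0 < s ∨ s = 0 ∧ x ∉ closure (support w)) :
    ContinuousAt (uncurry (jumpSum w)) (s, x) := by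
  rcases h with hs | ⟨rfl, hx⟩
  · refine ContinuousOn.continuousAt (s := {q | 0 < q.1}) ?_
      ((isOpen_lt continuous_const continuous_fst).mem_nhds hs)
    refine continuousOn_tsum (fun d => continuousOn_const.mul (continuousOn_rampStep.comp
      (continuousOn_fst.prodMk (continuousOn_snd.sub continuousOn_const)) fun _ hq => hq)) hw
      fun d q _ => ?_
    rw [Real.norm_eq_abs, abs_of_nonneg (mul_nonneg (hw₀ d) (rampStep_nonneg _ _))]
    exact mul_le_of_le_one_right (hw₀ d) (rampStep_le_one _ _)
  · exact continuousAt_const.congr (EventuallyEq.symm (eventually_jumpSum_eq hx))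

lemma continuous_jumpSum (hw₀ : 0 ≤ w) (hw : Summable w) {s : ℝ} (hs : 0 < s) :
    Continuous (jumpSum w s) :=
  continuous_iff_continuousAt.2 fun _ =>
    (continuousAt_jumpSum hw₀ hw (Or.inl hs)).comp (f := fun y => (s, y)) (by fun_prop)

end JumpSum

noncomputable def staircase (w : ℝ → ℝ) (x : ℝ) : ℝ := Real.arctan x + jumpSum w 0 x

structure IsJumpWeight (B : Set ℝ) (w : ℝ → ℝ) : Prop where
  nonneg : 0 ≤ w
  summable : Summable w
  eq_zero : ∀ x ∈ B, w x = 0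
  /-- Makes the staircase jump at every common endpoint of two components of `B`. -/
  pos : ∀ b ∉ B, 𝓝[Bᶜ ∩ Ioi b] b = ⊥ → 0 < w b

lemma exists_isJumpWeight (B : Set ℝ) : ∃ w, IsJumpWeight B w := by
  obtain ⟨ε, hε, c, hc, -⟩ :=
    (countable_setOfPred_isolated_right_within (s := Bᶜ)).exists_pos_hasSum_le one_pos
  exact ⟨indicator {b ∈ Bᶜ | 𝓝[Bᶜ ∩ Ioi b] b = ⊥} ε,
    ⟨indicator_nonneg fun b _ => (hε b).le, summable_subtype_iff_indicator.1 hc.summable,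
    fun x hx => indicator_of_notMem (fun h => h.1 hx) _,
    fun b hb hb' => (indicator_of_mem (s := {b ∈ Bᶜ | 𝓝[Bᶜ ∩ Ioi b] b = ⊥}) ⟨hb, hb'⟩ ε).symm ▸
      hε b⟩⟩

def HasSeparatedComponents {X : Type*} [TopologicalSpace X] (E : Set X) : Prop :=
  ∀ x ∈ E, ∀ y ∈ E, connectedComponentIn E x ≠ connectedComponentIn E y →
    Disjoint (closure (connectedComponentIn E x)) (closure (connectedComponentIn E y))

namespace IsJumpWeight

variable {B : Set ℝ} {w : ℝ → ℝ} (hw : IsJumpWeight B w)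
include hw

lemma notMem_closure_support (hB : IsOpen B) {x : ℝ} (hx : x ∈ B) :
    x ∉ closure (support w) :=
  fun h => closure_minimal (s := support w) (fun d hd hdB => hd (hw.eq_zero d hdB))
    hB.isClosed_compl h hx

lemma staircase_strictMono : StrictMono (staircase w) := fun _ _ hab =>
  add_lt_add_of_lt_of_le (Real.arctan_strictMono hab) (jumpSum_mono hw.nonneg hw.summable 0 hab.le)

lemma staircase_mem_Icc (x : ℝ) :
    staircase w x ∈ Icc (-(Real.pi / 2)) (Real.pi / 2 + ∑' d, w d) := by
  have hJ := jumpSum_mem_Icc hw.nonneg hw.summable 0 x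
  have := Real.neg_pi_div_two_lt_arctan x
  have := Real.arctan_lt_pi_div_two x
  constructor <;> unfold staircase <;> linarith [hJ.1, hJ.2]

lemma continuousAt_staircase (hB : IsOpen B) {x : ℝ} (hx : x ∈ B) :
    ContinuousAt (staircase w) x :=
  Real.continuous_arctan.continuousAt.add <|
    (continuousAt_jumpSum hw.nonneg hw.summable
      (Or.inr ⟨rfl, hw.notMem_closure_support hB hx⟩)).comp
      (f := fun y => (0, y)) (continuousAt_const.prodMk continuousAt_id)

lemma disjoint_closure_image_staircase (hB : IsOpen B) {x y : ℝ} (hx : x ∈ B) (hy : y ∈ B)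
    (hxy : x < y) (hne : connectedComponentIn B x ≠ connectedComponentIn B y) :
    Disjoint (closure (staircase w '' connectedComponentIn B x))
      (closure (staircase w '' connectedComponentIn B y)) := by
  set Z := Bᶜ ∩ Icc x y
  have hZ : Z.Nonempty := by
    by_contra hZ
    refine hne (connectedComponentIn_eq (isPreconnected_Icc.subset_connectedComponentIn
      ⟨le_rfl, hxy.le⟩ (fun z hz => ?_) ⟨hxy.le, le_rfl⟩))
    by_contra hzB
    exact hZ ⟨z, hzB, hz⟩
  have hZc : IsClosed Z := hB.isClosed_compl.inter isClosed_Icc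
  have hZb : BddBelow Z := ⟨x, fun z hz => hz.2.1⟩
  have hZa : BddAbove Z := ⟨y, fun z hz => hz.2.2⟩
  have hb : sInf Z ∈ Z := hZc.csInf_mem hZ hZb
  have ha : sSup Z ∈ Z := hZc.csSup_mem hZ hZa
  have hI : ∀ z ∈ connectedComponentIn B x, z < sInf Z := fun z hz => by
    by_contra! h
    exact hb.1 (connectedComponentIn_subset B x
      (isPreconnected_connectedComponentIn.ordConnected.out (mem_connectedComponentIn hx) hz
        ⟨hb.2.1, h⟩))
  have hJ : ∀ z ∈ connectedComponentIn B y, sSup Z < z := fun z hz => by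
    by_contra! h
    exact ha.1 (connectedComponentIn_subset B y
      (isPreconnected_connectedComponentIn.ordConnected.out hz (mem_connectedComponentIn hy)
        ⟨h, ha.2.2⟩))
  -- if the gap `Z` is a single point, it is a common endpoint and the staircase jumps there
  obtain ⟨c, hc, hJc⟩ : ∃ c, staircase w (sInf Z) < c ∧
      ∀ z ∈ connectedComponentIn B y, c ≤ staircase w z := by
    rcases (csInf_le_csSup hZ hZb hZa).lt_or_eq with hlt | heq
    · exact ⟨staircase w (sSup Z), hw.staircase_strictMono hlt,
        fun z hz => (hw.staircase_strictMono (hJ z hz)).le⟩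
    refine ⟨staircase w (sInf Z) + w (sInf Z), lt_add_of_pos_right _ (hw.pos _ hb.1 ?_),
      fun z hz => ?_⟩
    · rw [← empty_mem_iff_bot, mem_nhdsWithin]
      refine ⟨Iio y, isOpen_Iio, hb.2.2.lt_of_ne fun h => hb.1 (h ▸ hy), ?_⟩
      rintro z ⟨hzy, hzB, hz⟩
      exact (le_csSup hZa ⟨hzB, hb.2.1.trans (le_of_lt hz), hzy.le⟩).not_gt (heq ▸ hz)
    · have hz' : sInf Z < z := heq ▸ hJ z hz
      have := jumpSum_add_le hw.nonneg hw.summable hz'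
      have := Real.arctan_strictMono hz'
      unfold staircase
      linarith
  refine Disjoint.mono (closure_minimal ?_ isClosed_Iic) (closure_minimal ?_ isClosed_Ici)
    (Iic_disjoint_Ici.2 hc.not_ge)
  · rintro _ ⟨z, hz, rfl⟩
    exact (hw.staircase_strictMono (hI z hz)).le
  · rintro _ ⟨z, hz, rfl⟩
    exact hJc z hz

lemma hasSeparatedComponents_image_staircase (hB : IsOpen B) :
    HasSeparatedComponents (staircase w '' B) := by
  have hgc : ∀ x ∈ B, ContinuousAt (staircase w) x := fun x hx => hw.continuousAt_staircase hB hx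
  rintro _ ⟨x, hx, rfl⟩ _ ⟨y, hy, rfl⟩ hne
  rw [← hw.staircase_strictMono.image_connectedComponentIn hB hgc hx,
    ← hw.staircase_strictMono.image_connectedComponentIn hB hgc hy] at hne ⊢
  replace hne : connectedComponentIn B x ≠ connectedComponentIn B y := fun h => hne (by rw [h])
  rcases lt_trichotomy x y with hxy | rfl | hxy
  · exact hw.disjoint_closure_image_staircase hB hx hy hxy hne
  · exact absurd rfl hne
  · exact (hw.disjoint_closure_image_staircase hB hy hx hxy hne.symm).symm

end IsJumpWeight

def stripOf (u v : ℝ) (E₁ E₂ : Set ℝ) : Set (ℝ × ℝ) :=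
  univ ×ˢ Ioo u v ∪ E₁ ×ˢ {u} ∪ E₂ ×ˢ {v}

section StripOf

variable {u v : ℝ} {E₁ E₂ : Set ℝ}

lemma mem_stripOf {p : ℝ × ℝ} : p ∈ stripOf u v E₁ E₂ ↔
    p.2 ∈ Ioo u v ∨ p.1 ∈ E₁ ∧ p.2 = u ∨ p.1 ∈ E₂ ∧ p.2 = v := by
  simp [stripOf, or_assoc]

lemma isStrip_stripOf (huv : u < v) (h₁ : IsOpen E₁) (h₂ : IsOpen E₂) :
    IsStrip (stripOf u v E₁ E₂) u v := by
  refine ⟨huv, fun p hp => mem_stripOf.2 (Or.inl hp.2), fun p hp => ?_,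
    univ ×ˢ Ioo u v ∪ E₁ ×ˢ Iio v ∪ E₂ ×ˢ Ioi u,
    ((isOpen_univ.prod isOpen_Ioo).union (h₁.prod isOpen_Iio)).union (h₂.prod isOpen_Ioi), ?_⟩
  · rcases mem_stripOf.1 hp with h | ⟨-, h⟩ | ⟨-, h⟩
    · exact ⟨trivial, Ioo_subset_Icc_self h⟩
    · exact ⟨trivial, by rw [h]; exact left_mem_Icc.2 huv.le⟩
    · exact ⟨trivial, by rw [h]; exact right_mem_Icc.2 huv.le⟩
  · ext ⟨x, t⟩
    simp only [stripOf, mem_union, mem_inter_iff, mem_prod, mem_univ, mem_Ioo,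
      mem_Iio, mem_Ioi, mem_Icc, true_and]
    grind

lemma IsStrip.exists_eq_stripOf {S : Set (ℝ × ℝ)} (hS : IsStrip S u v) :
    ∃ E₁ E₂, IsOpen E₁ ∧ IsOpen E₂ ∧ S = stripOf u v E₁ E₂ := by
  obtain ⟨huv, hsub, -, U, hU, rfl⟩ := hS
  refine ⟨(·, u) ⁻¹' U, (·, v) ⁻¹' U, hU.preimage (by fun_prop), hU.preimage (by fun_prop), ?_⟩
  ext ⟨x, t⟩
  simp only [mem_stripOf, mem_inter_iff, mem_prod, mem_univ, mem_Icc, mem_preimage, true_and]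
  constructor
  · rintro ⟨hxU, htu, htv⟩
    rcases htu.eq_or_lt with rfl | htu
    · exact Or.inr (Or.inl ⟨hxU, rfl⟩)
    rcases htv.eq_or_lt with rfl | htv
    · exact Or.inr (Or.inr ⟨hxU, rfl⟩)
    exact Or.inl ⟨htu, htv⟩
  · rintro (h | ⟨hx, rfl⟩ | ⟨hx, rfl⟩)
    · exact ⟨(hsub (show (x, t) ∈ univ ×ˢ Ioo u v from ⟨trivial, h⟩)).1, h.1.le, h.2.le⟩
    · exact ⟨hx, le_rfl, huv.le⟩
    · exact ⟨hx, huv.le, le_rfl⟩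

lemma stripBd_stripOf :
    stripBd (stripOf u v E₁ E₂) u v = E₁ ×ˢ {u} ∪ E₂ ×ˢ {v} := by
  ext ⟨x, t⟩
  simp only [stripBd, mem_inter_iff, mem_stripOf, mem_ofPred_eq, mem_union, mem_prod,
    mem_singleton_iff, mem_Ioo]
  grind

lemma connectedComponentIn_rows (huv : u ≠ v) {x : ℝ} (hx : x ∈ E₁) :
    connectedComponentIn (E₁ ×ˢ {u} ∪ E₂ ×ˢ {v}) (x, u) = connectedComponentIn E₁ x ×ˢ {u} := by
  set W := E₁ ×ˢ {u} ∪ E₂ ×ˢ {v}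
  obtain ⟨V₁, V₂, hV₁, hV₂, hu, hv, hV⟩ := t2_separation huv
  have hxu : (x, u) ∈ E₁ ×ˢ {u} := ⟨hx, rfl⟩
  have hW : W ⊆ Prod.snd ⁻¹' V₁ ∪ Prod.snd ⁻¹' V₂ := by
    rintro p (⟨-, h⟩ | ⟨-, h⟩)
    · exact Or.inl (by rw [mem_preimage, mem_singleton_iff.1 h]; exact hu)
    · exact Or.inr (by rw [mem_preimage, mem_singleton_iff.1 h]; exact hv)
  have hsep : connectedComponentIn W (x, u) ⊆ Prod.snd ⁻¹' V₁ :=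
    isPreconnected_connectedComponentIn.subset_left_of_subset_union
      (hV₁.preimage continuous_snd) (hV₂.preimage continuous_snd) (hV.preimage Prod.snd)
      ((connectedComponentIn_subset _ _).trans hW)
      ⟨(x, u), mem_connectedComponentIn (subset_union_left hxu), hu⟩
  have hrow : connectedComponentIn W (x, u) ⊆ E₁ ×ˢ {u} := by
    intro p hp
    rcases connectedComponentIn_subset _ _ hp with h | ⟨-, h⟩
    · exact h
    · exact absurd (hsep hp) (hV.notMem_of_mem_right (by rw [mem_singleton_iff.1 h]; exact hv))
  rw [((connectedComponentIn_mono _ subset_union_left).antisymm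
    (isPreconnected_connectedComponentIn.subset_connectedComponentIn
      (mem_connectedComponentIn (subset_union_left hxu)) hrow)).symm, prod_singleton,
    prod_singleton]
  exact (image_connectedComponentIn_of_leftInvOn (f' := Prod.fst) (by fun_prop)
    continuousOn_fst (fun _ _ => rfl) hx).symm

lemma HasSeparatedComponents.rows (h₁ : HasSeparatedComponents E₁)
    (h₂ : HasSeparatedComponents E₂) (huv : u ≠ v) :
    HasSeparatedComponents (E₁ ×ˢ {u} ∪ E₂ ×ˢ {v}) := by
  have cc₁ : ∀ x ∈ E₁, connectedComponentIn (E₁ ×ˢ {u} ∪ E₂ ×ˢ {v}) (x, u) =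
      connectedComponentIn E₁ x ×ˢ {u} := fun x hx => connectedComponentIn_rows huv hx
  have cc₂ : ∀ x ∈ E₂, connectedComponentIn (E₁ ×ˢ {u} ∪ E₂ ×ˢ {v}) (x, v) =
      connectedComponentIn E₂ x ×ˢ {v} := fun x hx => by
    rw [union_comm]; exact connectedComponentIn_rows huv.symm hx
  have hrows : Disjoint (closure ({u} : Set ℝ)) (closure {v}) := by
    rw [closure_singleton, closure_singleton]; exact disjoint_singleton.2 huv
  rintro ⟨x, _⟩ (⟨hx, rfl⟩ | ⟨hx, rfl⟩) ⟨y, _⟩ (⟨hy, rfl⟩ | ⟨hy, rfl⟩) hne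
  · rw [cc₁ x hx, cc₁ y hy] at hne ⊢
    rw [closure_prod_eq, closure_prod_eq]
    exact (h₁ x hx y hy fun h => hne (by rw [h])).set_prod_left _ _
  · rw [cc₁ x hx, cc₂ y hy, closure_prod_eq, closure_prod_eq]
    exact hrows.set_prod_right _ _
  · rw [cc₂ x hx, cc₁ y hy, closure_prod_eq, closure_prod_eq]
    exact hrows.symm.set_prod_right _ _
  · rw [cc₂ x hx, cc₂ y hy] at hne ⊢
    rw [closure_prod_eq, closure_prod_eq]
    exact (h₂ x hx y hy fun h => hne (by rw [h])).set_prod_left _ _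

lemma isModelStrip_stripOf (huv : u < v) (ho₁ : IsOpen E₁) (ho₂ : IsOpen E₂)
    (hb₁ : Bornology.IsBounded E₁) (hb₂ : Bornology.IsBounded E₂)
    (hs₁ : HasSeparatedComponents E₁) (hs₂ : HasSeparatedComponents E₂) :
    IsModelStrip (stripOf u v E₁ E₂) u v := by
  refine ⟨isStrip_stripOf huv ho₁ ho₂, fun p _ => ?_, fun p hp q hq hne => ?_⟩ <;>
    rw [stripBd_stripOf] at *
  · exact ((hb₁.prod Bornology.isBounded_singleton).union
      (hb₂.prod Bornology.isBounded_singleton)).subset (connectedComponentIn_subset _ _)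
  · exact disjoint_iff_inter_eq_empty.1 (hs₁.rows hs₂ huv.ne p hp q hq hne)

end StripOf

def fiberMap (f : ℝ → ℝ → ℝ) (p : ℝ × ℝ) : ℝ × ℝ := (f p.1 p.2, p.2)

section FiberMap

variable {f : ℝ → ℝ → ℝ}

lemma image_fiberMap_stripOf {u v : ℝ} {E₁ E₂ : Set ℝ}
    (hsurj : ∀ t ∈ Ioo u v, Surjective (f · t)) :
    fiberMap f '' stripOf u v E₁ E₂ = stripOf u v ((f · u) '' E₁) ((f · v) '' E₂) := by
  ext ⟨y, t⟩
  simp only [mem_image, mem_stripOf, fiberMap, Prod.exists, Prod.mk.injEq]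
  constructor
  · rintro ⟨x, t, h | ⟨hx, rfl⟩ | ⟨hx, rfl⟩, rfl, rfl⟩
    · exact Or.inl h
    · exact Or.inr (Or.inl ⟨⟨x, hx, rfl⟩, rfl⟩)
    · exact Or.inr (Or.inr ⟨⟨x, hx, rfl⟩, rfl⟩)
  · rintro (h | ⟨⟨x, hx, rfl⟩, rfl⟩ | ⟨⟨x, hx, rfl⟩, rfl⟩)
    · obtain ⟨x, rfl⟩ := hsurj t h y
      exact ⟨x, t, Or.inl h, rfl, rfl⟩
    · exact ⟨x, _, Or.inr (Or.inl ⟨hx, rfl⟩), rfl, rfl⟩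
    · exact ⟨x, _, Or.inr (Or.inr ⟨hx, rfl⟩), rfl, rfl⟩

lemma injOn_fiberMap {S : Set (ℝ × ℝ)} (hmono : ∀ t, StrictMonoOn (f · t) {x | (x, t) ∈ S}) :
    InjOn (fiberMap f) S := by
  rintro ⟨x, t⟩ hp ⟨y, s⟩ hq h
  simp only [fiberMap, Prod.mk.injEq] at h
  obtain ⟨h, rfl⟩ := h
  rw [(hmono t).injOn hp hq h]

lemma continuousOn_leftInv_fiberMap {g : ℝ × ℝ → ℝ × ℝ} {S : Set (ℝ × ℝ)} {T : Set ℝ}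
    (hS : ∃ U, IsOpen U ∧ S = U ∩ univ ×ˢ T) (hf : ContinuousOn (uncurry f) S)
    (hmono : ∀ t, StrictMonoOn (f · t) {x | (x, t) ∈ S}) (hg : LeftInvOn g (fiberMap f) S) :
    ContinuousOn g (fiberMap f '' S) := by
  obtain ⟨U, hU, rfl⟩ := hS
  rintro _ ⟨⟨x₀, t₀⟩, hp, rfl⟩
  set l := 𝓝[fiberMap f '' (U ∩ univ ×ˢ T)] fiberMap f (x₀, t₀)
  have hq₁ : Tendsto Prod.fst l (𝓝 (f x₀ t₀)) :=
    (continuous_fst.tendsto _).mono_left nhdsWithin_le_nhds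
  have hq₂ : Tendsto Prod.snd l (𝓝 t₀) := (continuous_snd.tendsto _).mono_left nhdsWithin_le_nhds
  obtain ⟨A, hA, V, hV, hAV⟩ := mem_nhds_prod_iff.1 (hU.mem_nhds hp.1)
  have hside : ∀ a ∈ A, ∀ᶠ q in l, (a, q.2) ∈ U ∩ univ ×ˢ T := fun a ha => by
    filter_upwards [hq₂ hV, eventually_mem_nhdsWithin] with q hqV hq
    obtain ⟨p, hpS, rfl⟩ := hq
    exact ⟨hAV ⟨ha, hqV⟩, trivial, hpS.2.2⟩
  have hlim : ∀ a ∈ A, Tendsto (fun q => f a q.2) l (𝓝 (f a t₀)) := fun a ha =>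
    (hf _ ((hside a ha).self_of_nhdsWithin (mem_image_of_mem _ hp))).tendsto.comp
      (tendsto_nhdsWithin_iff.2 ⟨tendsto_const_nhds.prodMk_nhds hq₂, hside a ha⟩)
  -- for `a < x₀ < b` in `A`, eventually `f a q.2 < q.1 < f b q.2`, trapping `(g q).1` in `(a, b)`
  have hfst : Tendsto (fun q => (g q).1) l (𝓝 x₀) := by
    refine (nhds_basis_Ioo x₀).tendsto_right_iff.2 fun ⟨a, b⟩ ⟨ha, hb⟩ => ?_
    obtain ⟨⟨a', b'⟩, ⟨ha', hb'⟩, hsub⟩ :=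
      (nhds_basis_Ioo x₀).mem_iff.1 (inter_mem hA (Ioo_mem_nhds ha hb))
    obtain ⟨hlA, hl⟩ := hsub (show (a' + x₀) / 2 ∈ Ioo a' b' by constructor <;> linarith)
    obtain ⟨hrA, hr⟩ := hsub (show (x₀ + b') / 2 ∈ Ioo a' b' by constructor <;> linarith)
    have hl₀ := (hside _ hlA).self_of_nhdsWithin (mem_image_of_mem _ hp)
    have hr₀ := (hside _ hrA).self_of_nhdsWithin (mem_image_of_mem _ hp)
    filter_upwards [(hlim _ hlA).eventually_lt hq₁ (((hmono t₀).lt_iff_lt hl₀ hp).2 (by linarith)),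
      hq₁.eventually_lt (hlim _ hrA) (((hmono t₀).lt_iff_lt hp hr₀).2 (by linarith)),
      hside _ hlA, hside _ hrA, eventually_mem_nhdsWithin] with q h₁ h₂ h₃ h₄ hq
    obtain ⟨p, hpS, rfl⟩ := hq
    rw [hg hpS]
    exact ⟨hl.1.trans (((hmono p.2).lt_iff_lt h₃ hpS).1 h₁),
      (((hmono p.2).lt_iff_lt hpS h₄).1 h₂).trans hr.2⟩
  have hsnd : ∀ᶠ q in l, q.2 = (g q).2 := by
    filter_upwards [eventually_mem_nhdsWithin] with q hq
    obtain ⟨p, hpS, rfl⟩ := hq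
    rw [hg hpS]
    rfl
  rw [ContinuousWithinAt, hg hp]
  exact hfst.prodMk_nhds (hq₂.congr' hsnd)

lemma foliatedHomeo_fiberMap {A : Set (ℝ × ℝ)} {g : ℝ × ℝ → ℝ × ℝ}
    (hF : ContinuousOn (fiberMap f) A) (hg : ContinuousOn g (fiberMap f '' A))
    (hgf : LeftInvOn g (fiberMap f) A) : FoliatedHomeo A (fiberMap f '' A) (fiberMap f) := by
  refine ⟨hgf.injOn.bijOn_image, hF, ⟨g, ⟨hgf, hgf.rightInvOn_image⟩, hg⟩, ?_⟩
  rintro _ ⟨p, hp, rfl⟩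
  refine ⟨fiberMap f p, mem_image_of_mem _ hp, ?_⟩
  have hrow : fiberMap f '' ({q | q.2 = p.2} ∩ A) = {q | q.2 = p.2} ∩ fiberMap f '' A := by
    rw [inter_comm, inter_comm _ (fiberMap f '' A)]
    exact image_inter_preimage (fiberMap f) A {q | q.2 = p.2}
  rw [image_connectedComponentIn_of_leftInvOn (s := {q | q.2 = p.2} ∩ A)
    (hF.mono inter_subset_right) (hg.mono (image_mono inter_subset_right))
    (hgf.mono inter_subset_right) ⟨rfl, hp⟩, hrow]
  rfl

end FiberMap

/-- The term `(t - u) * (v - t) * x` makes every interior line surjective; the ramp widths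
`t - u` and `v - t` make the map continuous up to the boundary lines, where it is a staircase. -/
noncomputable def stripFun (u v : ℝ) (wu wv : ℝ → ℝ) (x t : ℝ) : ℝ :=
  (t - u) * (v - t) * x + Real.arctan x +
    ((v - t) * jumpSum wu (t - u) x + (t - u) * jumpSum wv (v - t) x) / (v - u)

section StripFun

variable {u v : ℝ} {wu wv : ℝ → ℝ}

lemma stripFun_left (huv : u < v) (x : ℝ) : stripFun u v wu wv x u = staircase wu x := by
  have : v - u ≠ 0 := sub_ne_zero.2 huv.ne'
  simp only [stripFun, staircase, sub_self, zero_mul, zero_add, add_zero]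
  field_simp

lemma stripFun_right (huv : u < v) (x : ℝ) : stripFun u v wu wv x v = staircase wv x := by
  have : v - u ≠ 0 := sub_ne_zero.2 huv.ne'
  simp only [stripFun, staircase, sub_self, zero_mul, mul_zero, zero_add]
  field_simp

variable (hwu₀ : 0 ≤ wu) (hwu : Summable wu) (hwv₀ : 0 ≤ wv) (hwv : Summable wv)
include hwu₀ hwu hwv₀ hwv

lemma stripFun_strictMono (huv : u < v) {t : ℝ} (ht : t ∈ Icc u v) :
    StrictMono (stripFun u v wu wv · t) := by
  intro a b hab
  have htu : 0 ≤ t - u := sub_nonneg.2 ht.1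
  have hvt : 0 ≤ v - t := sub_nonneg.2 ht.2
  have hjumps : (v - t) * jumpSum wu (t - u) a + (t - u) * jumpSum wv (v - t) a ≤
      (v - t) * jumpSum wu (t - u) b + (t - u) * jumpSum wv (v - t) b := by
    gcongr
    exacts [jumpSum_mono hwu₀ hwu _ hab.le, jumpSum_mono hwv₀ hwv _ hab.le]
  refine add_lt_add_of_lt_of_le (add_lt_add_of_le_of_lt ?_ (Real.arctan_strictMono hab))
    (div_le_div_of_nonneg_right hjumps (by linarith))
  exact mul_le_mul_of_nonneg_left hab.le (mul_nonneg htu hvt)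

lemma abs_stripFun_sub_le (huv : u < v) {t : ℝ} (ht : t ∈ Icc u v) (x : ℝ) :
    |stripFun u v wu wv x t - (t - u) * (v - t) * x| ≤
      Real.pi / 2 + ∑' d, wu d + ∑' d, wv d := by
  obtain ⟨hJu₀, hJu⟩ := jumpSum_mem_Icc hwu₀ hwu (t - u) x
  obtain ⟨hJv₀, hJv⟩ := jumpSum_mem_Icc hwv₀ hwv (v - t) x
  have htu : 0 ≤ t - u := sub_nonneg.2 ht.1
  have hvt : 0 ≤ v - t := sub_nonneg.2 ht.2
  have hJ₀ : 0 ≤ ((v - t) * jumpSum wu (t - u) x + (t - u) * jumpSum wv (v - t) x) / (v - u) :=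
    div_nonneg (by positivity) (by linarith)
  have hJ : ((v - t) * jumpSum wu (t - u) x + (t - u) * jumpSum wv (v - t) x) / (v - u) ≤
      ∑' d, wu d + ∑' d, wv d := by
    rw [div_le_iff₀ (by linarith)]
    nlinarith [mul_le_mul_of_nonneg_left hJu hvt, mul_le_mul_of_nonneg_left hJv htu]
  have := Real.neg_pi_div_two_lt_arctan x
  have := Real.arctan_lt_pi_div_two x
  rw [abs_le]
  constructor <;> unfold stripFun <;> linarith

lemma stripFun_surjective (huv : u < v) {t : ℝ} (ht : t ∈ Ioo u v) :
    Surjective (stripFun u v wu wv · t) := by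
  have hc : 0 < (t - u) * (v - t) := mul_pos (sub_pos.2 ht.1) (sub_pos.2 ht.2)
  have hbound x := abs_le.1 (abs_stripFun_sub_le hwu₀ hwu hwv₀ hwv huv (Ioo_subset_Icc_self ht) x)
  refine Continuous.surjective ?_
    (tendsto_atTop_mono (fun x => by simp only [id]; linarith [(hbound x).1])
      (tendsto_atTop_add_const_right _ (-(Real.pi / 2 + ∑' d, wu d + ∑' d, wv d))
        (tendsto_id.const_mul_atTop hc)))
    (tendsto_atBot_mono (fun x => by simp only [id]; linarith [(hbound x).2])
      (tendsto_atBot_add_const_right _ (Real.pi / 2 + ∑' d, wu d + ∑' d, wv d)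
        (tendsto_id.const_mul_atBot hc)))
  exact ((continuous_const.mul continuous_id).add Real.continuous_arctan).add
    (((continuous_const.mul (continuous_jumpSum hwu₀ hwu (sub_pos.2 ht.1))).add
      (continuous_const.mul (continuous_jumpSum hwv₀ hwv (sub_pos.2 ht.2)))).div_const _)

end StripFun

lemma continuousOn_stripFun {u v : ℝ} {Bu Bv : Set ℝ} {wu wv : ℝ → ℝ} (huv : u < v)
    (hBu : IsOpen Bu) (hBv : IsOpen Bv) (hwu : IsJumpWeight Bu wu) (hwv : IsJumpWeight Bv wv) :
    ContinuousOn (uncurry (stripFun u v wu wv)) (stripOf u v Bu Bv) := by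
  intro p hp
  have hJu : ContinuousAt (fun p : ℝ × ℝ => jumpSum wu (p.2 - u) p.1) p := by
    refine (continuousAt_jumpSum hwu.nonneg hwu.summable ?_).comp
      (f := fun p : ℝ × ℝ => (p.2 - u, p.1)) (by fun_prop)
    rcases mem_stripOf.1 hp with h | ⟨hx, h⟩ | ⟨-, h⟩
    · exact Or.inl (sub_pos.2 h.1)
    · exact Or.inr ⟨sub_eq_zero.2 h, hwu.notMem_closure_support hBu hx⟩
    · exact Or.inl (by rw [h]; exact sub_pos.2 huv)
  have hJv : ContinuousAt (fun p : ℝ × ℝ => jumpSum wv (v - p.2) p.1) p := by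
    refine (continuousAt_jumpSum hwv.nonneg hwv.summable ?_).comp
      (f := fun p : ℝ × ℝ => (v - p.2, p.1)) (by fun_prop)
    rcases mem_stripOf.1 hp with h | ⟨-, h⟩ | ⟨hx, h⟩
    · exact Or.inl (sub_pos.2 h.2)
    · exact Or.inl (by rw [h]; exact sub_pos.2 huv)
    · exact Or.inr ⟨sub_eq_zero.2 h.symm, hwv.notMem_closure_support hBv hx⟩
  exact ((by fun_prop : Continuous fun p : ℝ × ℝ => (p.2 - u) * (v - p.2) * p.1 +
    Real.arctan p.1).continuousAt.add ((((continuousAt_const.sub continuousAt_snd).mul hJu).add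
      ((continuousAt_snd.sub continuousAt_const).mul hJv)).div_const _)).continuousWithinAt

lemma isModelStrip_stripOf_staircase {u v : ℝ} {Bu Bv : Set ℝ} {wu wv : ℝ → ℝ} (huv : u < v)
    (hBu : IsOpen Bu) (hBv : IsOpen Bv) (hwu : IsJumpWeight Bu wu) (hwv : IsJumpWeight Bv wv) :
    IsModelStrip (stripOf u v (staircase wu '' Bu) (staircase wv '' Bv)) u v := by
  have hopen {B : Set ℝ} {w : ℝ → ℝ} (hB : IsOpen B) (hw : IsJumpWeight B w) :
      IsOpen (staircase w '' B) :=
    hw.staircase_strictMono.isOpen_image hB fun _ hx => hw.continuousAt_staircase hB hx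
  have hbdd {B : Set ℝ} {w : ℝ → ℝ} (hw : IsJumpWeight B w) :
      Bornology.IsBounded (staircase w '' B) :=
    Metric.isBounded_Icc _ _ |>.subset (image_subset_iff.2 fun x _ => hw.staircase_mem_Icc x)
  exact isModelStrip_stripOf huv (hopen hBu hwu) (hopen hBv hwv) (hbdd hwu) (hbdd hwv)
    (hwu.hasSeparatedComponents_image_staircase hBu)
    (hwv.hasSeparatedComponents_image_staircase hBv)

/-- every strip is foliated homeomorphic to a model strip. -/
theorem stmt_5 (S : Set (ℝ × ℝ)) (u v : ℝ) (hS : IsStrip S u v) :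
    ∃ (S' : Set (ℝ × ℝ)) (u' v' : ℝ) (F : ℝ × ℝ → ℝ × ℝ),
      IsModelStrip S' u' v' ∧ FoliatedHomeo S S' F := by
  obtain ⟨Bu, Bv, hBu, hBv, rfl⟩ := hS.exists_eq_stripOf
  have huv : u < v := hS.1
  obtain ⟨wu, hwu⟩ := exists_isJumpWeight Bu
  obtain ⟨wv, hwv⟩ := exists_isJumpWeight Bv
  have hmono : ∀ t, StrictMonoOn (stripFun u v wu wv · t) {x | (x, t) ∈ stripOf u v Bu Bv} :=
    fun t x hx _ _ hxy => stripFun_strictMono hwu.nonneg hwu.summable hwv.nonneg hwv.summable huv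
      (hS.2.2.1 hx).2 hxy
  have hinv := (injOn_fiberMap hmono).leftInvOn_invFunOn
  have hcont := continuousOn_stripFun huv hBu hBv hwu hwv
  refine ⟨_, u, v, _, ?_, foliatedHomeo_fiberMap (hcont.prodMk continuousOn_snd)
    (continuousOn_leftInv_fiberMap hS.2.2.2 hcont hmono hinv) hinv⟩
  rw [image_fiberMap_stripOf fun t ht =>
    stripFun_surjective hwu.nonneg hwu.summable hwv.nonneg hwv.summable huv ht]
  simp only [stripFun_left huv, stripFun_right huv]
  exact isModelStrip_stripOf_staircase huv hBu hBv hwu hwv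
end

section
/- Fix a < b in ℝ and let T = ℝ×[0,1) ∪ (a,b)×{1}. Then there exists a homeomorphism h : ℝ×[0,1] → T preserving the second coordinate and fixed pointwise on ℝ×{0}. -/
open Set

noncomputable def Fm (r x t : ℝ) : ℝ := x * (r + (1-t) * |x|) / (r + |x|)
noncomputable def Gm (r u t : ℝ) : ℝ :=
  2*u*r / ((r - |u|) + Real.sqrt ((r - |u|)^2 + 4*(1-t) * |u| * r))

lemma Dpos {r t u : ℝ} (hr : 0 < r) (ht0 : 0 ≤ t) (ht1 : t ≤ 1)
    (hc : t < 1 ∨ |u| < r) :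
    0 < (r - |u|) + Real.sqrt ((r - |u|)^2 + 4*(1-t) * |u| * r) := by
  set U := |u| with hUdef
  have hU0 : 0 ≤ U := abs_nonneg u
  have hΔ0 : 0 ≤ (r - U)^2 + 4*(1-t)*U*r := by
    have h1 : 0 ≤ 4*(1-t)*U*r :=
      mul_nonneg (mul_nonneg (by linarith) hU0) hr.le
    nlinarith [sq_nonneg (r-U)]
  have hs0 : 0 ≤ Real.sqrt ((r - U)^2 + 4*(1-t)*U*r) := Real.sqrt_nonneg _
  rcases lt_or_ge U r with h | h
  · linarith
  · have ht : t < 1 := by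
      rcases hc with h' | h'
      · exact h'
      · exact absurd h' (not_lt.2 h)
    have hU0' : 0 < U := lt_of_lt_of_le hr h
    have hlt : (U - r)^2 < (r - U)^2 + 4*(1-t)*U*r := by
      have h4 := mul_pos (mul_pos (show (0:ℝ) < 4*(1-t) by linarith) hU0') hr
      nlinarith
    have := (Real.lt_sqrt (by linarith : (0:ℝ) ≤ U - r)).2 hlt
    linarith

lemma GF {r t : ℝ} (hr : 0 < r) (ht0 : 0 ≤ t) (ht1 : t ≤ 1) (x : ℝ) :
    Gm r (Fm r x t) t = x := by
  set X := |x| with hXdef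
  have hX0 : 0 ≤ X := abs_nonneg x
  have hden : 0 < r + X := by linarith
  set c := (r + (1-t)*X) / (r + X) with hc
  have hnum0 : 0 < r + (1-t)*X := by nlinarith
  have hc0 : 0 < c := div_pos hnum0 hden
  have hFm : Fm r x t = x * c := by
    simp only [Fm, hc, ← hXdef, mul_div_assoc]
  have habs : |Fm r x t| = X * c := by
    rw [hFm, abs_mul, abs_of_pos hc0, hXdef]
  have hcX : c * (r + X) = r + (1-t)*X := by rw [hc]; field_simp
  set U := X * c with hUdef
  have hU : U * (r + X) = X * (r + (1-t)*X) := by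
    rw [hUdef, mul_assoc, hcX]
  set s := 2*(1-t)*X + (r - U) with hs
  have hs2 : s^2 = (r-U)^2 + 4*(1-t)*U*r := by
    rw [hs]; linear_combination (-(4*(1-t))) * hU
  have hsX : s*(r+X) = r^2 + 2*(1-t)*r*X + (1-t)*X^2 := by
    rw [hs]; linear_combination (-1 : ℝ) * hU
  have hs0 : 0 < s := by
    have e1 : (0:ℝ) ≤ 1 - t := by linarith
    have e2 : 0 ≤ 2*(1-t)*r*X := mul_nonneg (mul_nonneg (by linarith) hr.le) hX0
    have e3 : 0 ≤ (1-t)*X^2 := mul_nonneg e1 (sq_nonneg X)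
    have e4 : 0 < r^2 := by positivity
    have h1 : 0 < s * (r + X) := by rw [hsX]; linarith
    by_contra hcon
    push_neg at hcon
    nlinarith
  have hsqrt : Real.sqrt ((r-U)^2 + 4*(1-t)*U*r) = s := by
    rw [← hs2, Real.sqrt_sq hs0.le]
  have hDc : (r - U) + s = 2*r*c := by
    rw [hs, hUdef]; linear_combination (-2 : ℝ) * hcX
  have hD0 : (0:ℝ) < 2*r*c := by positivity
  have habs' : |x * c| = U := by rw [abs_mul, abs_of_pos hc0, ← hXdef, hUdef]
  simp only [Gm, hFm, habs', hsqrt, hDc]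
  rw [div_eq_iff hD0.ne']
  ring

lemma FG {r t u : ℝ} (hr : 0 < r) (ht0 : 0 ≤ t) (ht1 : t ≤ 1)
    (hc : t < 1 ∨ |u| < r) : Fm r (Gm r u t) t = u := by
  set U := |u| with hUdef
  have hU0 : 0 ≤ U := abs_nonneg u
  have hΔ0 : 0 ≤ (r - U)^2 + 4*(1-t)*U*r := by
    have h1 : 0 ≤ 4*(1-t)*U*r :=
      mul_nonneg (mul_nonneg (by linarith) hU0) hr.le
    nlinarith [sq_nonneg (r-U)]
  have hD : 0 < (r - U) + Real.sqrt ((r - U)^2 + 4*(1-t)*U*r) :=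
    Dpos hr ht0 ht1 hc
  set s := Real.sqrt ((r - U)^2 + 4*(1-t)*U*r) with hsdef
  have hsq : s^2 = (r-U)^2 + 4*(1-t)*U*r := Real.sq_sqrt hΔ0
  set D := (r - U) + s with hDdef
  have hDsq : D^2 = 2*D*(r-U) + 4*(1-t)*U*r := by
    rw [hDdef]; linear_combination hsq
  have hGm : Gm r u t = 2*u*r/D := rfl
  have habsG : |Gm r u t| = 2*U*r/D := by
    rw [hGm, abs_div, abs_of_pos hD, abs_mul, abs_mul, abs_two, abs_of_pos hr, hUdef]
  have hX0 : (0:ℝ) ≤ 2*U*r/D := div_nonneg (by positivity) hD.le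
  have hden2 : 0 < r + 2*U*r/D := by linarith
  have habs' : |2*u*r/D| = 2*U*r/D := by rw [← hGm, habsG]
  simp only [Fm, hGm, habs']
  rw [div_eq_iff hden2.ne']
  set k := 2*r/D with hkdef
  have hk : k*D = 2*r := div_mul_cancel₀ _ hD.ne'
  have hkey : k*(r+(1-t)*(U*k)) = r + U*k := by
    apply mul_right_cancel₀ (pow_ne_zero 2 hD.ne')
    linear_combination (r*D + (1-t)*U*k*D + 2*(1-t)*U*r - U*D)*hk + (-r)*hDsq
  have h1 : 2*u*r/D = u*k := by rw [hkdef]; ring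
  have h2 : 2*U*r/D = U*k := by rw [hkdef]; ring
  rw [h1, h2]
  linear_combination u * hkey

lemma Fm_zero {r : ℝ} (hr : 0 < r) (x : ℝ) : Fm r x 0 = x := by
  have h0 : (0:ℝ) < r + |x| := by positivity
  simp only [Fm]
  rw [div_eq_iff h0.ne']
  ring

lemma Fm_one_lt {r : ℝ} (hr : 0 < r) (x : ℝ) : |Fm r x 1| < r := by
  have h0 : (0:ℝ) < r + |x| := by positivity
  simp only [Fm]
  rw [abs_div, abs_of_pos h0, div_lt_iff₀ h0, abs_mul]
  have h1 : r + (1-1) * |x| = r := by ring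
  rw [h1, abs_of_pos hr]
  nlinarith [abs_nonneg x]

/-- for a < b and T = ℝ×[0,1) ∪ (a,b)×{1} there is a homeomorphism
h : ℝ×[0,1] → T preserving the second coordinate and fixed pointwise on ℝ×{0}. -/
theorem stmt_7 (a b : ℝ) (hab : a < b) :
    ∃ h : ℝ × ℝ → ℝ × ℝ,
      BijOn h (univ ×ˢ Icc (0:ℝ) 1)
        ((univ ×ˢ Ico (0:ℝ) 1) ∪ (Ioo a b ×ˢ ({1} : Set ℝ))) ∧
      ContinuousOn h (univ ×ˢ Icc (0:ℝ) 1) ∧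
      (∃ g : ℝ × ℝ → ℝ × ℝ,
        InvOn g h (univ ×ˢ Icc (0:ℝ) 1)
          ((univ ×ˢ Ico (0:ℝ) 1) ∪ (Ioo a b ×ˢ ({1} : Set ℝ))) ∧
        ContinuousOn g ((univ ×ˢ Ico (0:ℝ) 1) ∪ (Ioo a b ×ˢ ({1} : Set ℝ)))) ∧
      (∀ p ∈ univ ×ˢ Icc (0:ℝ) 1, (h p).2 = p.2) ∧
      (∀ x : ℝ, h (x, 0) = (x, 0)) := by
  set r := (b - a)/2 with hrdef
  set m := (a + b)/2 with hmdef
  have hr : 0 < r := by rw [hrdef]; linarith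
  have ha : a = m - r := by rw [hmdef, hrdef]; ring
  have hb : b = m + r := by rw [hmdef, hrdef]; ring
  set h : ℝ × ℝ → ℝ × ℝ := fun p => (m*p.2 + Fm r (p.1 - m*p.2) p.2, p.2) with hh
  set g : ℝ × ℝ → ℝ × ℝ := fun p => (m*p.2 + Gm r (p.1 - m*p.2) p.2, p.2) with hg
  set S : Set (ℝ × ℝ) := univ ×ˢ Icc (0:ℝ) 1 with hS
  set T : Set (ℝ × ℝ) := (univ ×ˢ Ico (0:ℝ) 1) ∪ (Ioo a b ×ˢ ({1} : Set ℝ)) with hT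
  have hTfacts : ∀ p ∈ T, 0 ≤ p.2 ∧ p.2 ≤ 1 ∧ (p.2 < 1 ∨ |p.1 - m*p.2| < r) := by
    rintro p (⟨-, h2⟩ | ⟨h1, h2⟩)
    · exact ⟨h2.1, h2.2.le, Or.inl h2.2⟩
    · have h2' : p.2 = 1 := h2
      refine ⟨by rw [h2']; norm_num, le_of_eq h2', Or.inr ?_⟩
      rw [h2', mul_one]
      rw [ha, hb] at h1
      rw [abs_lt]
      exact ⟨by linarith [h1.1], by linarith [h1.2]⟩
  have hmapsh : MapsTo h S T := by
    rintro ⟨p1, p2⟩ ⟨-, h2⟩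
    simp only [hh]
    rcases lt_or_eq_of_le h2.2 with hlt | heq
    · exact Or.inl ⟨mem_univ _, h2.1, hlt⟩
    · have heq' : p2 = 1 := heq
      subst heq'
      refine Or.inr ⟨?_, rfl⟩
      have hF := Fm_one_lt hr (p1 - m*1)
      rw [abs_lt] at hF
      rw [ha, hb]
      constructor
      · show m - r < m*1 + Fm r (p1 - m*1) 1
        linarith [hF.1]
      · show m*1 + Fm r (p1 - m*1) 1 < m + r
        linarith [hF.2]
  have hmapsg : MapsTo g T S := by
    intro p hp
    obtain ⟨h0, h1, -⟩ := hTfacts p hp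
    exact ⟨mem_univ _, h0, h1⟩
  have hleft : LeftInvOn g h S := by
    rintro ⟨p1, p2⟩ ⟨-, h2⟩
    simp only [hh, hg]
    have harg : m*p2 + Fm r (p1 - m*p2) p2 - m*p2 = Fm r (p1 - m*p2) p2 := by ring
    rw [harg, GF hr h2.1 h2.2]
    have : m*p2 + (p1 - m*p2) = p1 := by ring
    rw [this]
  have hright : RightInvOn g h T := by
    intro p hp
    obtain ⟨h0, h1, hcond⟩ := hTfacts p hp
    simp only [hh, hg]
    have harg : m*p.2 + Gm r (p.1 - m*p.2) p.2 - m*p.2 = Gm r (p.1 - m*p.2) p.2 := by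
      ring
    rw [harg, FG hr h0 h1 hcond]
    have : m*p.2 + (p.1 - m*p.2) = p.1 := by ring
    rw [this]
  have hinv : InvOn g h S T := ⟨hleft, hright⟩
  have hconth : ContinuousOn h S := by
    apply Continuous.continuousOn
    simp only [hh]
    apply Continuous.prodMk
    · apply Continuous.add (by fun_prop)
      simp only [Fm]
      apply Continuous.div (by fun_prop) (by fun_prop)
      intro p
      have h1 := abs_nonneg (p.1 - m*p.2)
      exact ne_of_gt (by linarith)
    · fun_prop
  have hcontg : ContinuousOn g T := by
    simp only [hg]
    apply ContinuousOn.prodMk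
    · apply ContinuousOn.add (by fun_prop)
      simp only [Gm]
      apply ContinuousOn.div (by fun_prop)
      · apply Continuous.continuousOn
        apply Continuous.add (by fun_prop)
        apply Real.continuous_sqrt.comp
        fun_prop
      · intro p hp
        obtain ⟨h0, h1, hcond⟩ := hTfacts p hp
        exact (Dpos hr h0 h1 hcond).ne'
    · fun_prop
  refine ⟨h, hinv.bijOn hmapsh hmapsg, hconth, ⟨g, hinv, hcontg⟩, ?_, ?_⟩
  · intro p _; rfl
  · intro x
    simp only [hh]
    rw [mul_zero, sub_zero, Fm_zero hr, zero_add]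
end

section
/- Consider the sequence z_n = (0, 1/n) in ℝ², the set K = {z_n : n ∈ ℕ} ∪ {(0,0)}, the surface Z = ℝ² \ K, and the foliation Δ of Z whose leaves are the connected components of intersections of Z with horizontal lines ℝ×{y}. Then the family Σ of special leaves of Δ equals {(-∞,0)×{1/n}, (0,∞)×{1/n} : n ∈ ℕ} ∪ {(-∞,0)×{0}, (0,∞)×{0}}, and Σ is not locally finite: every neighbourhood of a point of the leaf (-∞,0)×{0} meets infinitely many special leaves. -/
open Set

/-- K = {(0, 1/n) : n ≥ 1} ∪ {(0,0)}. -/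
def Kset : Set (ℝ × ℝ) :=
  {p | ∃ n : ℕ, 1 ≤ n ∧ p = (0, 1 / (n : ℝ))} ∪ {(0, 0)}

/-- The surface Z = ℝ² \ K. -/
def Zsurf : Set (ℝ × ℝ) := Ksetᶜ

/-- The leaf of the foliation Δ through a point p ∈ Z: the connected component
of the horizontal section of Z containing p. -/
def leafThru (p : ℝ × ℝ) : Set (ℝ × ℝ) :=
  connectedComponentIn ({q : ℝ × ℝ | q.2 = p.2} ∩ Zsurf) p

/-- A subset of Z is saturated if it is a union of leaves. -/
def Saturated (U : Set (ℝ × ℝ)) : Prop :=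
  U ⊆ Zsurf ∧ ∀ p ∈ U, leafThru p ⊆ U

/-- A subset of Z is open in Z if it is the trace of an open subset of ℝ². -/
def OpenInZ (U : Set (ℝ × ℝ)) : Prop :=
  ∃ V : Set (ℝ × ℝ), IsOpen V ∧ U = V ∩ Zsurf

/-- ω̂ : the intersection of the closures (in Z) of all saturated open (in Z)
neighbourhoods of ω. -/
def hcl (ω : Set (ℝ × ℝ)) : Set (ℝ × ℝ) :=
  ⋂ U ∈ {U : Set (ℝ × ℝ) | Saturated U ∧ OpenInZ U ∧ ω ⊆ U}, (closure U ∩ Zsurf)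

/-- L is a leaf of Δ. -/
def IsLeafZ (L : Set (ℝ × ℝ)) : Prop := ∃ p ∈ Zsurf, L = leafThru p

/-- A leaf is special if ω̂ ≠ ω. -/
def SpecialLeaf (L : Set (ℝ × ℝ)) : Prop := IsLeafZ L ∧ hcl L ≠ L

/-! Auxiliary -/

def Svals : Set ℝ := {y | y = 0 ∨ ∃ n : ℕ, 1 ≤ n ∧ y = 1 / (n : ℝ)}

lemma mem_Kset_iff {p : ℝ × ℝ} : p ∈ Kset ↔ p.1 = 0 ∧ p.2 ∈ Svals := by
  constructor
  · rintro (⟨n, hn, rfl⟩ | h)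
    · exact ⟨rfl, Or.inr ⟨n, hn, rfl⟩⟩
    · simp only [mem_singleton_iff] at h
      subst h; exact ⟨rfl, Or.inl rfl⟩
  · rintro ⟨h1, (h2 | ⟨n, hn, h2⟩)⟩
    · right
      simp only [mem_singleton_iff, Prod.ext_iff]
      exact ⟨h1, h2⟩
    · left
      exact ⟨n, hn, Prod.ext h1 h2⟩

lemma mem_Zsurf_iff {p : ℝ × ℝ} : p ∈ Zsurf ↔ ¬(p.1 = 0 ∧ p.2 ∈ Svals) := by
  rw [Zsurf, mem_compl_iff, mem_Kset_iff]

lemma mem_Zsurf_of_ne {p : ℝ × ℝ} (h : p.1 ≠ 0) : p ∈ Zsurf := by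
  rw [mem_Zsurf_iff]; rintro ⟨h1, _⟩; exact h h1

lemma notMem_Svals_of_neg {y : ℝ} (hy : y < 0) : y ∉ Svals := by
  rintro (rfl | ⟨n, hn, rfl⟩)
  · exact lt_irrefl _ hy
  · have hn0 : (0:ℝ) < n := by exact_mod_cast hn
    have : (0:ℝ) < 1 / n := by positivity
    linarith

lemma notMem_Svals_between {n : ℕ} (hn : 1 ≤ n) {y : ℝ}
    (h1 : 1 / ((n : ℝ) + 1) < y) (h2 : y < 1 / (n : ℝ)) : y ∉ Svals := by
  have hn0 : (0:ℝ) < n := by exact_mod_cast hn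
  rintro (rfl | ⟨k, hk, rfl⟩)
  · have : (0:ℝ) < 1 / ((n:ℝ) + 1) := by positivity
    linarith
  · have hk0 : (0:ℝ) < k := by exact_mod_cast hk
    have h3 : (n:ℝ) < k := by
      by_contra h
      push_neg at h
      have := one_div_le_one_div_of_le hk0 h
      linarith
    have h4 : (n:ℝ) + 1 ≤ k := by exact_mod_cast (by exact_mod_cast h3 : n < k)
    have h5 : 1 / (k:ℝ) ≤ 1 / ((n:ℝ) + 1) := one_div_le_one_div_of_le (by positivity) h4
    linarith

lemma exists_near_not_Svals {c : ℝ} (hc : c ∈ Svals) {η : ℝ} (hη : 0 < η) :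
    ∃ y : ℝ, |y - c| < η ∧ y ∉ Svals := by
  rcases hc with rfl | ⟨n, hn, rfl⟩
  · refine ⟨-(η/2), ?_, notMem_Svals_of_neg (by linarith)⟩
    rw [sub_zero, abs_neg, abs_of_pos (by linarith)]
    linarith
  · have hn0 : (0:ℝ) < n := by exact_mod_cast hn
    set c : ℝ := 1 / (n:ℝ) with hcdef
    set b : ℝ := 1 / ((n:ℝ) + 1) with hbdef
    have hbc : b < c := by
      apply one_div_lt_one_div_of_lt hn0
      linarith
    set y : ℝ := max (c - η/2) ((b + c)/2) with hydef
    have hyc : y < c := by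
      apply max_lt <;> [linarith; linarith]
    have hby : b < y := lt_of_lt_of_le (by linarith) (le_max_right _ _)
    have hy1 : c - η/2 ≤ y := le_max_left _ _
    refine ⟨y, ?_, notMem_Svals_between hn hby hyc⟩
    rw [abs_sub_lt_iff]
    constructor <;> linarith

lemma isPreconnected_line (y : ℝ) : IsPreconnected {q : ℝ × ℝ | q.2 = y} := by
  have h : {q : ℝ × ℝ | q.2 = y} = (univ : Set ℝ) ×ˢ ({y} : Set ℝ) := by
    ext ⟨x, z⟩; simp [Set.mem_prod, eq_comm]
  rw [h]
  exact isPreconnected_univ.prod isPreconnected_singleton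

lemma line_subset_Zsurf {y : ℝ} (hy : y ∉ Svals) : {q : ℝ × ℝ | q.2 = y} ⊆ Zsurf := by
  intro q hq
  rw [mem_Zsurf_iff]
  rintro ⟨_, h2⟩
  exact hy (hq ▸ h2)

lemma section_eq_of_notMem {y : ℝ} (hy : y ∉ Svals) :
    {q : ℝ × ℝ | q.2 = y} ∩ Zsurf = {q : ℝ × ℝ | q.2 = y} :=
  inter_eq_left.mpr (line_subset_Zsurf hy)

lemma leaf_full {p : ℝ × ℝ} (hy : p.2 ∉ Svals) : leafThru p = {q : ℝ × ℝ | q.2 = p.2} := by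
  unfold leafThru
  rw [section_eq_of_notMem hy]
  exact Subset.antisymm (connectedComponentIn_subset _ _)
    ((isPreconnected_line p.2).subset_connectedComponentIn rfl Subset.rfl)

lemma section_eq_of_mem {c : ℝ} (hc : c ∈ Svals) :
    {q : ℝ × ℝ | q.2 = c} ∩ Zsurf = {q : ℝ × ℝ | q.2 = c ∧ q.1 ≠ 0} := by
  ext q
  simp only [mem_inter_iff, mem_setOf_eq, mem_Zsurf_iff]
  constructor
  · rintro ⟨h1, h2⟩
    exact ⟨h1, fun h0 => h2 ⟨h0, h1 ▸ hc⟩⟩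
  · rintro ⟨h1, h2⟩
    exact ⟨h1, fun h => h2 h.1⟩

lemma leaf_neg {a c : ℝ} (ha : a < 0) (hc : c ∈ Svals) :
    leafThru (a, c) = Iio (0:ℝ) ×ˢ ({c} : Set ℝ) := by
  have hmem : ((a, c) : ℝ × ℝ) ∈ {q : ℝ × ℝ | q.2 = c ∧ q.1 ≠ 0} := ⟨rfl, ne_of_lt ha⟩
  show connectedComponentIn ({q : ℝ × ℝ | q.2 = c} ∩ Zsurf) (a, c) = _
  rw [section_eq_of_mem hc]
  apply Subset.antisymm
  · have hu : IsOpen {q : ℝ × ℝ | q.1 < 0} := isOpen_lt continuous_fst continuous_const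
    have hv : IsOpen {q : ℝ × ℝ | (0:ℝ) < q.1} := isOpen_lt continuous_const continuous_fst
    have hdisj : Disjoint {q : ℝ × ℝ | q.1 < 0} {q : ℝ × ℝ | (0:ℝ) < q.1} := by
      rw [disjoint_left]
      intro q hq hq'
      simp only [mem_setOf_eq] at hq hq'
      exact lt_asymm hq hq'
    have hsub : connectedComponentIn {q : ℝ × ℝ | q.2 = c ∧ q.1 ≠ 0} (a, c) ⊆
        {q : ℝ × ℝ | q.1 < 0} ∪ {q : ℝ × ℝ | (0:ℝ) < q.1} := by
      intro q hq
      rcases lt_or_gt_of_ne (connectedComponentIn_subset _ _ hq).2 with h | h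
      · exact Or.inl h
      · exact Or.inr h
    have hne : (connectedComponentIn {q : ℝ × ℝ | q.2 = c ∧ q.1 ≠ 0} (a, c) ∩
        {q : ℝ × ℝ | q.1 < 0}).Nonempty :=
      ⟨(a, c), mem_connectedComponentIn hmem, ha⟩
    have hleft := IsPreconnected.subset_left_of_subset_union hu hv hdisj hsub hne
      (isPreconnected_connectedComponentIn)
    intro q hq
    exact ⟨hleft hq, (connectedComponentIn_subset _ _ hq).1⟩
  · apply IsPreconnected.subset_connectedComponentIn
    · exact isPreconnected_Iio.prod isPreconnected_singleton
    · exact ⟨ha, rfl⟩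
    · rintro ⟨x, z⟩ ⟨hx, hz⟩
      exact ⟨hz, ne_of_lt hx⟩

lemma leaf_pos {a c : ℝ} (ha : 0 < a) (hc : c ∈ Svals) :
    leafThru (a, c) = Ioi (0:ℝ) ×ˢ ({c} : Set ℝ) := by
  have hmem : ((a, c) : ℝ × ℝ) ∈ {q : ℝ × ℝ | q.2 = c ∧ q.1 ≠ 0} := ⟨rfl, ne_of_gt ha⟩
  show connectedComponentIn ({q : ℝ × ℝ | q.2 = c} ∩ Zsurf) (a, c) = _
  rw [section_eq_of_mem hc]
  apply Subset.antisymm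
  · have hu : IsOpen {q : ℝ × ℝ | (0:ℝ) < q.1} := isOpen_lt continuous_const continuous_fst
    have hv : IsOpen {q : ℝ × ℝ | q.1 < 0} := isOpen_lt continuous_fst continuous_const
    have hdisj : Disjoint {q : ℝ × ℝ | (0:ℝ) < q.1} {q : ℝ × ℝ | q.1 < 0} := by
      rw [disjoint_left]
      intro q hq hq'
      simp only [mem_setOf_eq] at hq hq'
      exact lt_asymm hq hq'
    have hsub : connectedComponentIn {q : ℝ × ℝ | q.2 = c ∧ q.1 ≠ 0} (a, c) ⊆
        {q : ℝ × ℝ | (0:ℝ) < q.1} ∪ {q : ℝ × ℝ | q.1 < 0} := by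
      intro q hq
      rcases lt_or_gt_of_ne (connectedComponentIn_subset _ _ hq).2 with h | h
      · exact Or.inr h
      · exact Or.inl h
    have hne : (connectedComponentIn {q : ℝ × ℝ | q.2 = c ∧ q.1 ≠ 0} (a, c) ∩
        {q : ℝ × ℝ | (0:ℝ) < q.1}).Nonempty :=
      ⟨(a, c), mem_connectedComponentIn hmem, ha⟩
    have hleft := IsPreconnected.subset_left_of_subset_union hu hv hdisj hsub hne
      (isPreconnected_connectedComponentIn)
    intro q hq
    exact ⟨hleft hq, (connectedComponentIn_subset _ _ hq).1⟩
  · apply IsPreconnected.subset_connectedComponentIn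
    · exact isPreconnected_Ioi.prod isPreconnected_singleton
    · exact ⟨ha, rfl⟩
    · rintro ⟨x, z⟩ ⟨hx, hz⟩
      exact ⟨hz, ne_of_gt hx⟩

lemma saturated_inter (W : Set ℝ) : Saturated ({q : ℝ × ℝ | q.2 ∈ W} ∩ Zsurf) := by
  refine ⟨inter_subset_right, ?_⟩
  intro p hp q hq
  have h1 : q ∈ {q : ℝ × ℝ | q.2 = p.2} ∩ Zsurf := connectedComponentIn_subset _ _ hq
  exact ⟨show q.2 ∈ W by rw [h1.1]; exact hp.1, h1.2⟩

lemma hcl_line {c : ℝ} (hc : c ∉ Svals) :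
    hcl {q : ℝ × ℝ | q.2 = c} = {q : ℝ × ℝ | q.2 = c} := by
  apply Subset.antisymm
  · intro q hq
    simp only [hcl, mem_iInter, mem_setOf_eq] at hq
    have key : ∀ ε : ℝ, 0 < ε → dist q.2 c ≤ ε := by
      intro ε hε
      have hU := hq ({q : ℝ × ℝ | q.2 ∈ Metric.ball c ε} ∩ Zsurf)
        ⟨saturated_inter _, ⟨_, Metric.isOpen_ball.preimage continuous_snd, rfl⟩,
          fun x hx => ⟨by simp only [mem_setOf_eq]; rw [mem_setOf_eq] at hx; simp [hx, hε],
            line_subset_Zsurf hc hx⟩⟩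
      have hclosed : closure ({q : ℝ × ℝ | q.2 ∈ Metric.ball c ε} ∩ Zsurf) ⊆
          {q : ℝ × ℝ | q.2 ∈ Metric.closedBall c ε} :=
        closure_minimal (fun x hx => Metric.ball_subset_closedBall hx.1)
          (Metric.isClosed_closedBall.preimage continuous_snd)
      exact hclosed hU.1
    have : dist q.2 c ≤ 0 := le_of_forall_pos_le_add (by intro ε hε; simpa using key ε hε)
    exact dist_le_zero.mp this
  · intro q hq
    simp only [hcl, mem_iInter, mem_setOf_eq]
    rintro U ⟨hsat, hopen, hsub⟩
    exact ⟨subset_closure (hsub hq), line_subset_Zsurf hc hq⟩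

lemma opp_mem_closure {U : Set (ℝ × ℝ)} (hsat : Saturated U) (hopen : OpenInZ U)
    {b c : ℝ} (hc : c ∈ Svals) (hbU : (b, c) ∈ U) : ((-b, c) : ℝ × ℝ) ∈ closure U := by
  obtain ⟨V, hV, rfl⟩ := hopen
  rw [Metric.mem_closure_iff]
  intro ε hε
  obtain ⟨δ, hδ, hball⟩ := Metric.isOpen_iff.mp hV (b, c) hbU.1
  obtain ⟨y, hy, hyS⟩ := exists_near_not_Svals hc (lt_min hε hδ)
  have hyε : |y - c| < ε := lt_of_lt_of_le hy (min_le_left _ _)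
  have hyδ : |y - c| < δ := lt_of_lt_of_le hy (min_le_right _ _)
  have hd : ∀ x : ℝ, dist ((x, y) : ℝ × ℝ) (x, c) = |y - c| := by
    intro x
    rw [Prod.dist_eq]
    simp [Real.dist_eq, abs_nonneg]
  have hby : ((b, y) : ℝ × ℝ) ∈ V := hball (by rw [Metric.mem_ball, hd]; exact hyδ)
  have hbyU : ((b, y) : ℝ × ℝ) ∈ V ∩ Zsurf :=
    ⟨hby, by rw [mem_Zsurf_iff]; rintro ⟨_, h2⟩; exact hyS h2⟩
  have hleaf : leafThru ((b, y) : ℝ × ℝ) = {q : ℝ × ℝ | q.2 = y} :=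
    leaf_full (show ((b, y) : ℝ × ℝ).2 ∉ Svals from hyS)
  have hmemleaf : ((-b, y) : ℝ × ℝ) ∈ leafThru ((b, y) : ℝ × ℝ) := by
    rw [hleaf]; exact rfl
  refine ⟨(-b, y), hsat.2 _ hbyU hmemleaf, ?_⟩
  rw [dist_comm, hd]
  exact hyε

lemma special_neg {c : ℝ} (hc : c ∈ Svals) : SpecialLeaf (Iio (0:ℝ) ×ˢ ({c} : Set ℝ)) := by
  have hz : ((-1 : ℝ), c) ∈ Zsurf := mem_Zsurf_of_ne (by norm_num)
  have hleaf := leaf_neg (show (-1:ℝ) < 0 by norm_num) hc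
  refine ⟨⟨((-1 : ℝ), c), hz, hleaf.symm⟩, ?_⟩
  intro hE
  have h1 : ((1:ℝ), c) ∈ hcl (Iio (0:ℝ) ×ˢ ({c} : Set ℝ)) := by
    simp only [hcl, mem_iInter, mem_setOf_eq]
    rintro U ⟨hsat, hopen, hsub⟩
    have hmem : ((-1:ℝ), c) ∈ U := hsub ⟨by norm_num, rfl⟩
    have h2 := opp_mem_closure hsat hopen hc hmem
    exact ⟨by simpa using h2, mem_Zsurf_of_ne (by norm_num)⟩
  rw [hE] at h1
  exact absurd h1.1 (by norm_num)

lemma special_pos {c : ℝ} (hc : c ∈ Svals) : SpecialLeaf (Ioi (0:ℝ) ×ˢ ({c} : Set ℝ)) := by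
  have hz : ((1 : ℝ), c) ∈ Zsurf := mem_Zsurf_of_ne (by norm_num)
  have hleaf := leaf_pos (show (0:ℝ) < 1 by norm_num) hc
  refine ⟨⟨((1 : ℝ), c), hz, hleaf.symm⟩, ?_⟩
  intro hE
  have h1 : ((-1:ℝ), c) ∈ hcl (Ioi (0:ℝ) ×ˢ ({c} : Set ℝ)) := by
    simp only [hcl, mem_iInter, mem_setOf_eq]
    rintro U ⟨hsat, hopen, hsub⟩
    have hmem : ((1:ℝ), c) ∈ U := hsub ⟨by norm_num, rfl⟩
    have h2 := opp_mem_closure hsat hopen hc hmem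
    exact ⟨h2, mem_Zsurf_of_ne (by norm_num)⟩
  rw [hE] at h1
  exact absurd h1.1 (by norm_num)

/-- the family of special leaves of Δ on Z = ℝ² \ K equals
{(-∞,0)×{1/n}, (0,∞)×{1/n} : n ≥ 1} ∪ {(-∞,0)×{0}, (0,∞)×{0}}, and it is not
locally finite: every neighbourhood of a point of (-∞,0)×{0} meets infinitely
many special leaves. -/
theorem stmt_16 :
    ({L : Set (ℝ × ℝ) | SpecialLeaf L} =
      {L : Set (ℝ × ℝ) | ∃ n : ℕ, 1 ≤ n ∧
          (L = Iio (0:ℝ) ×ˢ ({1 / (n : ℝ)} : Set ℝ) ∨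
           L = Ioi (0:ℝ) ×ˢ ({1 / (n : ℝ)} : Set ℝ))} ∪
        {Iio (0:ℝ) ×ˢ ({0} : Set ℝ), Ioi (0:ℝ) ×ˢ ({0} : Set ℝ)}) ∧
    (∀ p ∈ Iio (0:ℝ) ×ˢ ({0} : Set ℝ), ∀ V : Set (ℝ × ℝ), IsOpen V → p ∈ V →
      {L : Set (ℝ × ℝ) | SpecialLeaf L ∧ (L ∩ V).Nonempty}.Infinite) := by
  constructor
  · ext L
    simp only [mem_setOf_eq, mem_union, mem_insert_iff, mem_singleton_iff]
    constructor
    · rintro ⟨⟨p, hp, rfl⟩, hne⟩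
      by_cases hS : p.2 ∈ Svals
      · have hp1 : p.1 ≠ 0 := by
          intro h0
          exact (mem_Zsurf_iff.mp hp) ⟨h0, hS⟩
        rcases lt_or_gt_of_ne hp1 with hlt | hgt
        · have hL : leafThru p = Iio (0:ℝ) ×ˢ ({p.2} : Set ℝ) := leaf_neg hlt hS
          rcases hS with h0 | ⟨n, hn, hc⟩
          · right; left; rw [hL, h0]
          · left; exact ⟨n, hn, Or.inl (by rw [hL, hc])⟩
        · have hL : leafThru p = Ioi (0:ℝ) ×ˢ ({p.2} : Set ℝ) := leaf_pos hgt hS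
          rcases hS with h0 | ⟨n, hn, hc⟩
          · right; right; rw [hL, h0]
          · left; exact ⟨n, hn, Or.inr (by rw [hL, hc])⟩
      · exfalso
        apply hne
        rw [leaf_full hS]
        exact hcl_line hS
    · rintro (⟨n, hn, (rfl | rfl)⟩ | rfl | rfl)
      · exact special_neg (Or.inr ⟨n, hn, rfl⟩)
      · exact special_pos (Or.inr ⟨n, hn, rfl⟩)
      · exact special_neg (Or.inl rfl)
      · exact special_pos (Or.inl rfl)
  · rintro ⟨a, b⟩ ⟨ha, hb⟩ V hV hpV
    simp only [mem_singleton_iff] at hb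
    subst hb
    simp only [mem_Iio] at ha
    obtain ⟨ε, hε, hball⟩ := Metric.isOpen_iff.mp hV _ hpV
    obtain ⟨N, hN⟩ := exists_nat_gt (1/ε)
    apply Set.infinite_of_injective_forall_mem
      (f := fun k : ℕ => Iio (0:ℝ) ×ˢ ({1 / ((k + N + 1 : ℕ) : ℝ)} : Set ℝ))
    case hi =>
      intro k l hkl
      have h1 : ((-1:ℝ), 1 / ((k + N + 1 : ℕ) : ℝ)) ∈
          Iio (0:ℝ) ×ˢ ({1 / ((k + N + 1 : ℕ) : ℝ)} : Set ℝ) := ⟨by norm_num, rfl⟩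
      simp only [] at hkl
      rw [hkl] at h1
      have h2 : 1 / ((k + N + 1 : ℕ) : ℝ) = 1 / ((l + N + 1 : ℕ) : ℝ) := h1.2
      rw [one_div, one_div, inv_inj] at h2
      have h3 : (k + N + 1 : ℕ) = (l + N + 1 : ℕ) := by exact_mod_cast h2
      omega
    case hf =>
      intro k
      set y : ℝ := 1 / ((k + N + 1 : ℕ) : ℝ) with hydef
      have hyS : y ∈ Svals := Or.inr ⟨k + N + 1, by omega, rfl⟩
      have hcast : ((N : ℕ) : ℝ) ≤ ((k + N + 1 : ℕ) : ℝ) := by exact_mod_cast by omega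
      have hpos : (0:ℝ) < ((k + N + 1 : ℕ) : ℝ) := by positivity
      have hyε : y < ε := by
        rw [hydef, div_lt_iff₀ hpos]
        rw [div_lt_iff₀ hε] at hN
        nlinarith
      have hy0 : 0 < y := by rw [hydef]; positivity
      refine ⟨special_neg hyS, ⟨(a, y), ⟨ha, rfl⟩, hball ?_⟩⟩
      rw [Metric.mem_ball, Prod.dist_eq]
      simp only [Real.dist_eq, sub_self, abs_zero, sub_zero]
      rw [abs_of_pos hy0]
      exact max_lt hε hyε
end
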